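/- Let n be a positive integer, 𝔸 a nonzero additive subgroup of (ℝ,+), and Y ⊆ X ⊆ ℚⁿ ⊆ ℝⁿ. Suppose the convex hull conv_ℝ(X) is a polyhedron, i.e., a finite intersection of closed half-spaces {v ∈ ℝⁿ : φᵢ(v) ≤ cᵢ} (φᵢ linear functionals on ℝⁿ, cᵢ ∈ ℝ). Then Y is a weak 𝔸-face of X if and only if Y = F ∩ X for some exposed face F of conv_ℝ(X), where the exposed faces of a convex set C ⊆ ℝⁿ are the empty set together with the sets {p ∈ C : φ(p) ≥ φ(q) for all q ∈ C} for linear functionals φ on ℝⁿ (including φ = 0, which yields C itself). In particular, a nonempty Y ⊆ X is a weak 𝔸-face of X if and only if Y = X(φ) for some linear functional φ on ℝⁿ. -/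

import Mathlib

open Finsupp

/-- `R₊ := R ∩ [0,∞)`. -/
def Rplus (R : Set ℝ) : Set ℝ := R ∩ Set.Ici 0

/-- `ℓ(f) := Σ_v f(v)`. -/
noncomputable def ell {V : Type*} [AddCommGroup V] [Module ℝ V] (f : V →₀ ℝ) : ℝ :=
  f.sum fun _ r => r

/-- `ℓ⃗(f) := Σ_v f(v) • v`. -/
noncomputable def vell {V : Type*} [AddCommGroup V] [Module ℝ V] (f : V →₀ ℝ) : V :=
  f.sum fun v r => r • v

/-- `f ∈ Fin(X,R)`: finitely supported, support in `X`, values in `R ∪ {0}`. -/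
def IsFinSupp {V : Type*} [AddCommGroup V] [Module ℝ V] (X : Set V) (R : Set ℝ)
    (f : V →₀ ℝ) : Prop :=
  ↑f.support ⊆ X ∧ ∀ v, f v ∈ R ∪ {0}

/-- `Y` is a weak `R`-face of `X`. -/
def IsWeakFace {V : Type*} [AddCommGroup V] [Module ℝ V] (X Y : Set V) (R : Set ℝ) : Prop :=
  ∀ f g : V →₀ ℝ, IsFinSupp X (Rplus R) f → IsFinSupp Y (Rplus R) g →
    ell f = ell g → 0 < ell g → vell f = vell g → ↑f.support ⊆ Y

/-- `Y` is a positive weak `R`-face of `X`. -/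
def IsPosWeakFace {V : Type*} [AddCommGroup V] [Module ℝ V] (X Y : Set V) (R : Set ℝ) : Prop :=
  ∀ f g : V →₀ ℝ, IsFinSupp X (Rplus R) f → IsFinSupp Y (Rplus R) g →
    vell f = vell g → ell g ≤ ell f ∧ (ell g = ell f ↔ ↑f.support ⊆ Y)

/-- `Y` is `(R',R)`-closed in `X`. -/
def IsRClosed {V : Type*} [AddCommGroup V] [Module ℝ V] (X Y : Set V) (R' R : Set ℝ) : Prop :=
  ∀ f g : V →₀ ℝ, IsFinSupp X R f → IsFinSupp Y R g →
    ell f = ell g → ell f ∈ R' → ell f ≠ 0 → vell f = vell g → ↑f.support ⊆ Y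

/-- The maximizer set `X(φ)`. -/
def maximizer {V : Type*} [AddCommGroup V] [Module ℝ V] (X : Set V) (φ : V →ₗ[ℝ] ℝ) : Set V :=
  {x | x ∈ X ∧ ∀ x' ∈ X, φ x' ≤ φ x}

/-!
Exposed faces are weak faces for any `R`: if `g` is supported on `X(φ)`, where `φ` takes its
maximum `M`, then `M ℓ(f) - φ(ℓ⃗ f)` is a sum of nonnegative terms `f v (M - φ v)` which vanishes,
so `f` is supported on `X(φ)` too.

Conversely, let `Y` be a nonempty weak `𝔸`-face and `φ` the sum of those facet inequalities
`φₖ ≤ cₖ` of `conv X` that are tight on all of `Y`, so that `Y ⊆ X(φ)`. Clearing denominators and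
scaling by a positive element of `𝔸` shows that `Y` is a weak `ℚ`-face. Given `x ∈ X(φ)`, average
points of `Y` into a rational point `P` satisfying strictly every facet inequality that is not
tight on `Y`. For a small rational `ε > 0` the point `Q = P + ε (P - x)` still lies in `conv X`,
and since the real solution of a rational linear system with a unique solution is rational,
Carathéodory's theorem writes `Q` as a rational convex combination of points of `X`. Then
`Q + ε x = (1 + ε) P` compares two rational combinations of equal mass, one of them on `Y`, so the
weak-face property forces `x ∈ Y`.
-/

section Combinations

variable {V : Type*} [AddCommGroup V] [Module ℝ V]

theorem ell_eq_linearCombination (f : V →₀ ℝ) :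
    ell f = linearCombination ℝ (fun _ ↦ (1 : ℝ)) f := by
  simp [ell, linearCombination_apply]

theorem vell_eq_linearCombination (f : V →₀ ℝ) : vell f = linearCombination ℝ id f := by
  simp [vell, linearCombination_apply]

@[simp] theorem ell_add (f g : V →₀ ℝ) : ell (f + g) = ell f + ell g := by
  simp [ell_eq_linearCombination]

@[simp] theorem vell_add (f g : V →₀ ℝ) : vell (f + g) = vell f + vell g := by
  simp [vell_eq_linearCombination]

@[simp] theorem ell_smul (c : ℝ) (f : V →₀ ℝ) : ell (c • f) = c * ell f := by
  simp [ell_eq_linearCombination]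

@[simp] theorem vell_smul (c : ℝ) (f : V →₀ ℝ) : vell (c • f) = c • vell f := by
  simp [vell_eq_linearCombination]

@[simp] theorem ell_single (v : V) (r : ℝ) : ell (single v r) = r := by
  simp [ell_eq_linearCombination]

@[simp] theorem vell_single (v : V) (r : ℝ) : vell (single v r) = r • v := by
  simp [vell_eq_linearCombination]

@[simp] theorem ell_sum {ι : Type*} (s : Finset ι) (f : ι → V →₀ ℝ) :
    ell (∑ i ∈ s, f i) = ∑ i ∈ s, ell (f i) := by
  simp [ell_eq_linearCombination]

@[simp] theorem vell_sum {ι : Type*} (s : Finset ι) (f : ι → V →₀ ℝ) :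
    vell (∑ i ∈ s, f i) = ∑ i ∈ s, vell (f i) := by
  simp [vell_eq_linearCombination]

theorem mul_ell_sub_map_vell (φ : V →ₗ[ℝ] ℝ) (c : ℝ) (f : V →₀ ℝ) :
    c * ell f - φ (vell f) = ∑ v ∈ f.support, f v * (c - φ v) := by
  simp only [ell, vell, Finsupp.sum, map_sum, map_smul, smul_eq_mul, Finset.mul_sum,
    ← Finset.sum_sub_distrib]
  exact Finset.sum_congr rfl fun v _ ↦ by ring

theorem map_vell_of_forall_mem_support (φ : V →ₗ[ℝ] ℝ) {c : ℝ} {f : V →₀ ℝ}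
    (hf : ∀ v ∈ f.support, φ v = c) : φ (vell f) = c * ell f := by
  have := mul_ell_sub_map_vell φ c f
  rw [Finset.sum_eq_zero fun v hv ↦ by rw [hf v hv, sub_self, mul_zero]] at this
  linarith

theorem eq_of_map_vell_eq (φ : V →ₗ[ℝ] ℝ) {c : ℝ} {f : V →₀ ℝ} (hf : ∀ v, 0 ≤ f v)
    (hle : ∀ v ∈ f.support, φ v ≤ c) (heq : φ (vell f) = c * ell f) :
    ∀ v ∈ f.support, φ v = c := by
  have hterms : ∀ v ∈ f.support, 0 ≤ f v * (c - φ v) :=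
    fun v hv ↦ mul_nonneg (hf v) (sub_nonneg.2 (hle v hv))
  have hsum : ∑ v ∈ f.support, f v * (c - φ v) = 0 := by
    rw [← mul_ell_sub_map_vell, heq, sub_self]
  intro v hv
  have := (Finset.sum_eq_zero_iff_of_nonneg hterms).1 hsum v hv
  have := (mul_eq_zero.1 this).resolve_left (Finsupp.mem_support_iff.1 hv)
  linarith

end Combinations

section FinSupp

variable {V : Type*} [AddCommGroup V] [Module ℝ V]

theorem IsFinSupp.nonneg {X : Set V} {R : Set ℝ} {f : V →₀ ℝ} (hf : IsFinSupp X (Rplus R) f)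
    (v : V) : 0 ≤ f v := by
  rcases hf.2 v with h | h
  · exact h.2
  · exact (Set.mem_singleton_iff.1 h).ge

variable {S : Type*} [SetLike S ℝ] {K : S} {X : Set V} {f g : V →₀ ℝ}

theorem isFinSupp_rplus_iff [AddSubmonoidClass S ℝ] :
    IsFinSupp X (Rplus K) f ↔ ↑f.support ⊆ X ∧ ∀ v, f v ∈ K ∧ 0 ≤ f v := by
  refine and_congr_right fun _ ↦ forall_congr' fun v ↦ ?_
  constructor
  · rintro (h | h)
    · exact h
    · rw [Set.mem_singleton_iff.1 h]; exact ⟨zero_mem K, le_rfl⟩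
  · exact Or.inl

theorem IsFinSupp.add [AddSubmonoidClass S ℝ] (hf : IsFinSupp X (Rplus K) f)
    (hg : IsFinSupp X (Rplus K) g) : IsFinSupp X (Rplus K) (f + g) := by
  classical
  rw [isFinSupp_rplus_iff] at *
  refine ⟨(Finset.coe_subset.2 support_add).trans ?_, fun v ↦ ?_⟩
  · rw [Finset.coe_union]; exact Set.union_subset hf.1 hg.1
  · exact ⟨add_mem (hf.2 v).1 (hg.2 v).1, add_nonneg (hf.2 v).2 (hg.2 v).2⟩

theorem IsFinSupp.smul [SubsemiringClass S ℝ] {c : ℝ} (hcK : c ∈ K) (hc : 0 ≤ c)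
    (hf : IsFinSupp X (Rplus K) f) : IsFinSupp X (Rplus K) (c • f) := by
  rw [isFinSupp_rplus_iff] at *
  refine ⟨(Finset.coe_subset.2 support_smul).trans hf.1, fun v ↦ ?_⟩
  exact ⟨mul_mem hcK (hf.2 v).1, mul_nonneg hc (hf.2 v).2⟩

theorem isFinSupp_single [AddSubmonoidClass S ℝ] {x : V} {r : ℝ} (hx : x ∈ X) (hrK : r ∈ K)
    (hr : 0 ≤ r) : IsFinSupp X (Rplus K) (single x r) := by
  classical
  rw [isFinSupp_rplus_iff]
  refine ⟨(Finset.coe_subset.2 support_single_subset).trans (by simpa using hx), fun v ↦ ?_⟩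
  rw [single_apply]
  split_ifs
  exacts [⟨hrK, hr⟩, ⟨zero_mem K, le_rfl⟩]

theorem isFinSupp_sum_single [AddSubmonoidClass S ℝ] {ι : Type*} {s : Finset ι} {x : ι → V}
    {r : ι → ℝ} (hx : ∀ i ∈ s, x i ∈ X) (hrK : ∀ i ∈ s, r i ∈ K) (hr : ∀ i ∈ s, 0 ≤ r i) :
    IsFinSupp X (Rplus K) (∑ i ∈ s, single (x i) (r i)) :=
  Finset.sum_induction _ _ (fun _ _ ↦ IsFinSupp.add) (by simp [IsFinSupp, Rplus])
    fun i hi ↦ isFinSupp_single (hx i hi) (hrK i hi) (hr i hi)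

end FinSupp

section Maximizer

variable {V : Type*} [AddCommGroup V] [Module ℝ V]

theorem maximizer_convexHull_inter (X : Set V) (φ : V →ₗ[ℝ] ℝ) :
    maximizer (convexHull ℝ X) φ ∩ X = maximizer X φ := by
  ext x
  refine ⟨fun ⟨⟨_, hmax⟩, hx⟩ ↦ ⟨hx, fun x' hx' ↦ hmax x' (subset_convexHull ℝ X hx')⟩,
    fun ⟨hx, hmax⟩ ↦ ⟨⟨subset_convexHull ℝ X hx, fun p hp ↦ ?_⟩, hx⟩⟩
  exact convexHull_min hmax (convex_halfSpace_le φ.isLinear (φ x)) hp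

theorem isWeakFace_empty (X : Set V) (R : Set ℝ) : IsWeakFace X ∅ R := by
  intro f g _ hg _ hpos _
  have : g = 0 := support_eq_empty.1 (Finset.coe_eq_empty.1 (Set.subset_empty_iff.1 hg.1))
  simp [this, ell] at hpos

theorem isWeakFace_maximizer (X : Set V) (R : Set ℝ) (φ : V →ₗ[ℝ] ℝ) :
    IsWeakFace X (maximizer X φ) R := by
  intro f g hf hg hℓ hpos hv
  obtain ⟨y₀, hy₀⟩ : g.support.Nonempty := by
    rw [Finset.nonempty_iff_ne_empty, Ne, support_eq_empty]
    rintro rfl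
    simp [ell] at hpos
  obtain ⟨hy₀X, hy₀max⟩ := hg.1 hy₀
  have hg_eq : φ (vell g) = φ y₀ * ell g := map_vell_of_forall_mem_support φ fun y hy ↦
    le_antisymm (hy₀max y (hg.1 hy).1) ((hg.1 hy).2 y₀ hy₀X)
  have hf_eq := eq_of_map_vell_eq φ hf.nonneg (fun v hv ↦ hy₀max v (hf.1 hv))
    (by rw [hv, hg_eq, hℓ])
  intro v hv
  exact ⟨hf.1 hv, fun x' hx' ↦ (hf_eq v hv).symm ▸ hy₀max x' hx'⟩

end Maximizer

theorem Rat.mem_castHom_fieldRange {r : ℝ} :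
    r ∈ (Rat.castHom ℝ).fieldRange ↔ ∃ q : ℚ, (q : ℝ) = r :=
  RingHom.mem_fieldRange

theorem exists_nat_mul_eq_intCast (s : Finset ℝ)
    (hs : ∀ r ∈ s, r ∈ (Rat.castHom ℝ).fieldRange) :
    ∃ N : ℕ, 0 < N ∧ ∀ r ∈ s, ∃ z : ℤ, (N : ℝ) * r = z := by
  classical
  induction s using Finset.induction_on with
  | empty => exact ⟨1, one_pos, by simp⟩
  | insert r s _ ih =>
    obtain ⟨N, hN, hNs⟩ := ih fun r' hr' ↦ hs r' (Finset.mem_insert_of_mem hr')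
    obtain ⟨q, rfl⟩ := Rat.mem_castHom_fieldRange.1 (hs r (Finset.mem_insert_self r s))
    refine ⟨N * q.den, by positivity, ?_⟩
    simp only [Finset.mem_insert, forall_eq_or_imp]
    refine ⟨⟨N * q.num, ?_⟩, fun r' hr' ↦ ?_⟩
    · have := congrArg ((↑) : ℚ → ℝ) (Rat.den_mul_eq_num q)
      push_cast at this ⊢
      rw [mul_assoc, this]
    · obtain ⟨z, hz⟩ := hNs r' hr'
      exact ⟨q.den * z, by push_cast; rw [← hz]; ring⟩

theorem AddSubgroup.exists_pos_mem_of_ne_bot {A : AddSubgroup ℝ} (hA : A ≠ ⊥) :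
    ∃ a ∈ A, 0 < a := by
  obtain ⟨⟨b, hbA⟩, hb⟩ := AddSubgroup.ne_bot_iff_exists_ne_zero.1 hA
  rcases lt_or_gt_of_ne (fun h ↦ hb (Subtype.ext h)) with h | h
  · exact ⟨-b, neg_mem hbA, neg_pos.2 h⟩
  · exact ⟨b, hbA, h⟩

theorem IsWeakFace.rat_of_ne_bot {V : Type*} [AddCommGroup V] [Module ℝ V] {X Y : Set V}
    {A : AddSubgroup ℝ} (h : IsWeakFace X Y A) (hA : A ≠ ⊥) :
    IsWeakFace X Y (Rat.castHom ℝ).fieldRange := by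
  intro f g hf hg hℓ hpos hv
  obtain ⟨a, haA, ha⟩ := AddSubgroup.exists_pos_mem_of_ne_bot hA
  obtain ⟨N, hN, hNint⟩ := exists_nat_mul_eq_intCast (f.frange ∪ g.frange) fun r hr ↦ by
    rcases Finset.mem_union.1 hr with hr | hr
    · obtain ⟨v, rfl⟩ := (mem_frange.1 hr).2
      exact ((isFinSupp_rplus_iff.1 hf).2 v).1
    · obtain ⟨v, rfl⟩ := (mem_frange.1 hr).2
      exact ((isFinSupp_rplus_iff.1 hg).2 v).1
  have hc : (0 : ℝ) < N * a := by positivity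
  have hscale {Z : Set V} {u : V →₀ ℝ} (hu : IsFinSupp Z (Rplus (Rat.castHom ℝ).fieldRange) u)
      (hNu : ∀ v ∈ u.support, ∃ z : ℤ, (N : ℝ) * u v = z) :
      IsFinSupp Z (Rplus A) (((N : ℝ) * a) • u) := by
    refine ⟨by rw [support_smul_eq hc.ne']; exact hu.1, fun v ↦ ?_⟩
    by_cases hv : v ∈ u.support
    · obtain ⟨z, hz⟩ := hNu v hv
      have hval : (((N : ℝ) * a) • u) v = z • a := by
        simp only [coe_smul, Pi.smul_apply, smul_eq_mul, zsmul_eq_mul, ← hz]; ring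
      refine Or.inl ⟨hval ▸ zsmul_mem haA z, ?_⟩
      exact Set.mem_Ici.2 (by simpa using mul_nonneg hc.le (hu.nonneg v))
    · simp [notMem_support_iff.1 hv]
  have := h _ _
    (hscale hf fun v hv ↦ hNint _ (Finset.mem_union_left _ (mem_frange_of_mem hv)))
    (hscale hg fun v hv ↦ hNint _ (Finset.mem_union_right _ (mem_frange_of_mem hv)))
    (by simp [hℓ]) (by simpa using mul_pos hc hpos) (by simp [hv])
  rwa [support_smul_eq hc.ne'] at this

open Matrix in
theorem Matrix.exists_mulVec_eq_of_map_mulVec_eq {K L : Type*} [Field K] [Field L] [Algebra K L]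
    {m n : Type*} [Fintype m] [Fintype n] (M : Matrix m n K) (b : m → K) {x : n → L}
    (hx : M.map (algebraMap K L) *ᵥ x = algebraMap K L ∘ b) : ∃ y : n → K, M *ᵥ y = b := by
  classical
  by_contra! hb
  have hbM : b ∉ LinearMap.range M.mulVecLin := fun ⟨y, hy⟩ ↦ hb y hy
  obtain ⟨ψ, hψb, hψM⟩ := Submodule.exists_dual_map_eq_bot_of_notMem hbM inferInstance
  set r : m → K := fun i ↦ ψ (Pi.single i 1)
  -- `ψ` is the row vector `r`: then `r ᵥ* M = 0` but `r ⬝ᵥ b ≠ 0`, which `x` contradicts over `L`.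
  have hψ (z : m → K) : ψ z = r ⬝ᵥ z := by
    rw [LinearMap.pi_apply_eq_sum_univ ψ z, dotProduct]
    refine Finset.sum_congr rfl fun i _ ↦ ?_
    rw [smul_eq_mul, mul_comm]
    congr 2
    ext j
    simp [Pi.single_apply, eq_comm]
  have hrM : r ᵥ* M = 0 := by
    ext j
    have := Submodule.mem_map_of_mem (f := ψ) (LinearMap.mem_range_self M.mulVecLin (Pi.single j 1))
    rwa [hψM, Submodule.mem_bot, Matrix.mulVecLin_apply, hψ, dotProduct_mulVec, dotProduct_single,
      mul_one] at this
  apply hψb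
  apply (algebraMap K L).injective
  have : (algebraMap K L ∘ r) ᵥ* M.map (algebraMap K L) = 0 := by
    ext j; rw [← RingHom.map_vecMul, hrM]; simp
  rw [hψ, map_zero, RingHom.map_dotProduct, ← hx, dotProduct_mulVec, this, zero_dotProduct]

open Matrix in
theorem AffineIndependent.weight_mem_of_sum_smul_eq {ι κ : Type*} [Fintype ι] [Fintype κ]
    {K : Subfield ℝ} {y : κ → ι → ℝ} (hy : AffineIndependent ℝ y) (hyK : ∀ k i, y k i ∈ K)
    {p : ι → ℝ} (hpK : ∀ i, p i ∈ K) {w : κ → ℝ} (hw1 : ∑ k, w k = 1)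
    (hwp : ∑ k, w k • y k = p) (k : κ) : w k ∈ K := by
  let M : Matrix (Option ι) κ K := Matrix.of fun o k ↦ o.elim 1 fun i ↦ ⟨y k i, hyK k i⟩
  let b : Option ι → K := fun o ↦ o.elim 1 fun i ↦ ⟨p i, hpK i⟩
  have hsys (v : κ → ℝ) : M.map (algebraMap K ℝ) *ᵥ v = algebraMap K ℝ ∘ b ↔
      ∑ k, v k = 1 ∧ ∑ k, v k • y k = p := by
    simp only [funext_iff, Option.forall, mulVec, dotProduct, Matrix.map_apply, Matrix.of_apply,
      M, b, Function.comp_apply, Option.elim, map_one, one_mul, Finset.sum_apply, Pi.smul_apply,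
      smul_eq_mul]
    simp_rw [mul_comm (v _)]
    rfl
  obtain ⟨c, hc⟩ := M.exists_mulVec_eq_of_map_mulVec_eq b ((hsys w).2 ⟨hw1, hwp⟩)
  obtain ⟨hc1, hcp⟩ := (hsys (algebraMap K ℝ ∘ c)).1 (by
    ext o; rw [← RingHom.map_mulVec, hc]; rfl)
  have hwc := (affineIndependent_iff_eq_of_fintype_affineCombination_eq ℝ y).1 hy w _ hw1 hc1
    (by rw [Finset.affineCombination_eq_linear_combination _ _ _ hw1,
      Finset.affineCombination_eq_linear_combination _ _ _ hc1, hwp, hcp])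
  rw [hwc]
  exact (c k).2

theorem exists_isFinSupp_of_mem_convexHull {ι : Type*} [Fintype ι] {K : Subfield ℝ}
    {X : Set (ι → ℝ)} (hXK : ∀ x ∈ X, ∀ i, x i ∈ K) {p : ι → ℝ} (hpK : ∀ i, p i ∈ K)
    (hpX : p ∈ convexHull ℝ X) :
    ∃ γ : (ι → ℝ) →₀ ℝ, IsFinSupp X (Rplus K) γ ∧ ell γ = 1 ∧ vell γ = p := by
  rw [convexHull_eq_union] at hpX
  simp only [Set.mem_iUnion] at hpX
  obtain ⟨t, htX, hti, hpt⟩ := hpX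
  obtain ⟨w, hw0, hw1, hwp⟩ := Finset.mem_convexHull'.1 hpt
  have hwK (y : ι → ℝ) (hy : y ∈ t) : w y ∈ K :=
    hti.weight_mem_of_sum_smul_eq (fun y i ↦ hXK y (htX y.2) i) hpK (w := fun y : t ↦ w y)
      (by rwa [Finset.sum_coe_sort t w]) (by rwa [Finset.sum_coe_sort t fun y ↦ w y • y]) ⟨y, hy⟩
  exact ⟨∑ y ∈ t, single y (w y), isFinSupp_sum_single (fun y hy ↦ htX hy) hwK hw0,
    by simpa using hw1, by simpa using hwp⟩

section Polyhedron

variable {S : Type*} [SetLike S ℝ]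

theorem vell_apply_mem [SubsemiringClass S ℝ] {K : S} {ι : Type*} {X : Set (ι → ℝ)}
    (hXK : ∀ x ∈ X, ∀ i, x i ∈ K) {f : (ι → ℝ) →₀ ℝ} (hf : IsFinSupp X (Rplus K) f) (i : ι) :
    vell f i ∈ K := by
  rw [vell, Finsupp.sum, Finset.sum_apply]
  exact sum_mem fun v hv ↦ by
    simpa using mul_mem ((isFinSupp_rplus_iff.1 hf).2 v).1 (hXK v (hf.1 hv) i)

theorem IsWeakFace.mem_of_vell_add_smul_eq {V : Type*} [AddCommGroup V] [Module ℝ V]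
    [SubsemiringClass S ℝ] {K : S} {X Y : Set V} (h : IsWeakFace X Y K) {γ β : V →₀ ℝ}
    (hγ : IsFinSupp X (Rplus K) γ) (hβ : IsFinSupp Y (Rplus K) β) (hγ1 : ell γ = 1)
    (hβ1 : ell β = 1) {x : V} (hx : x ∈ X) {ε : ℝ} (hεK : ε ∈ K) (hε : 0 < ε)
    (heq : vell γ + ε • x = (1 + ε) • vell β) : x ∈ Y := by
  refine h (γ + single x ε) ((1 + ε) • β) (hγ.add (isFinSupp_single hx hεK hε.le))
    (hβ.smul (add_mem (one_mem K) hεK) (by positivity)) (by simp [hγ1, hβ1])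
    (by simp only [ell_smul, hβ1]; positivity) (by simp [heq]) ?_
  have : 0 < (γ + single x ε) x := by simpa using add_pos_of_nonneg_of_pos (hγ.nonneg x) hε
  exact mem_support_iff.2 this.ne'

theorem exists_isFinSupp_map_vell_lt [SubfieldClass S ℝ] (K : S) {V : Type*} [AddCommGroup V]
    [Module ℝ V] {κ : Type*} [Fintype κ] {Y : Set V} (hY : Y.Nonempty) (φ : κ → V →ₗ[ℝ] ℝ)
    (c : κ → ℝ) (hYc : ∀ k, ∀ y ∈ Y, φ k y ≤ c k) :
    ∃ β : V →₀ ℝ, IsFinSupp Y (Rplus K) β ∧ ell β = 1 ∧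
      ∀ k, (∃ y ∈ Y, φ k y < c k) → φ k (vell β) < c k := by
  obtain ⟨y₀, hy₀⟩ := hY
  have hwit (k : κ) : ∃ y ∈ Y, (∃ y ∈ Y, φ k y < c k) → φ k y < c k := by
    by_cases hk : ∃ y ∈ Y, φ k y < c k
    · obtain ⟨y, hy, hlt⟩ := hk
      exact ⟨y, hy, fun _ ↦ hlt⟩
    · exact ⟨y₀, hy₀, fun h ↦ absurd h hk⟩
  choose yw hywY hywlt using hwit
  let pts : Option κ → V := fun o ↦ o.elim y₀ yw
  have hpts : ∀ o, pts o ∈ Y := by rintro (_ | k); exacts [hy₀, hywY k]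
  set N : ℝ := (Fintype.card (Option κ) : ℝ)
  have hN : 0 < N := by positivity
  refine ⟨∑ o, single (pts o) N⁻¹, isFinSupp_sum_single (fun o _ ↦ hpts o)
    (fun _ _ ↦ inv_mem (natCast_mem K _)) (fun _ _ ↦ by positivity), ?_, fun k hk ↦ ?_⟩
  · simp only [ell_sum, ell_single, Finset.sum_const, Finset.card_univ, nsmul_eq_mul]
    exact mul_inv_cancel₀ hN.ne'
  · simp only [vell_sum, vell_single, map_sum, map_smul, smul_eq_mul]
    calc ∑ o, N⁻¹ * φ k (pts o) < ∑ _o : Option κ, N⁻¹ * c k :=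
          Finset.sum_lt_sum (fun o _ ↦ by gcongr; exact hYc k _ (hpts o))
            ⟨some k, Finset.mem_univ _, by gcongr; exact hywlt k hk⟩
      _ = c k := by
        rw [Finset.sum_const, Finset.card_univ, nsmul_eq_mul, ← mul_assoc, mul_inv_cancel₀ hN.ne',
          one_mul]

open Filter Topology in
theorem exists_rat_pos_forall_mul_le {κ : Type*} [Finite κ] {a b : κ → ℝ}
    (h : ∀ k, 0 < a k ∨ (0 ≤ a k ∧ b k ≤ 0)) : ∃ ε : ℚ, 0 < ε ∧ ∀ k, ε * b k ≤ a k := by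
  have hev : ∀ᶠ ε in 𝓝[>] (0 : ℝ), ∀ k, ε * b k ≤ a k := by
    refine eventually_all.2 fun k ↦ ?_
    rcases h k with ha | ⟨ha, hb⟩
    · have : Tendsto (fun ε : ℝ ↦ ε * b k) (𝓝[>] 0) (𝓝 0) := by
        simpa using ((continuous_mul_const (b k)).tendsto 0).mono_left nhdsWithin_le_nhds
      exact (this.eventually (gt_mem_nhds ha)).mono fun _ h ↦ h.le
    · exact eventually_mem_nhdsWithin.mono fun ε hε ↦
        (mul_nonpos_of_nonneg_of_nonpos (le_of_lt hε) hb).trans ha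
  obtain ⟨u, hu, hsub⟩ := mem_nhdsGT_iff_exists_Ioo_subset.1 hev
  obtain ⟨ε, hε0, hεu⟩ := exists_rat_btwn (Set.mem_Ioi.1 hu)
  exact ⟨ε, by exact_mod_cast hε0, hsub ⟨hε0, hεu⟩⟩

theorem map_le_of_convexHull_eq_iInter {V κ : Type*} [AddCommGroup V] [Module ℝ V] {X : Set V}
    {φ : κ → V →ₗ[ℝ] ℝ} {c : κ → ℝ} (hX : convexHull ℝ X = ⋂ k, {v | φ k v ≤ c k}) (k : κ)
    {x : V} (hx : x ∈ X) : φ k x ≤ c k :=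
  Set.mem_iInter.1 (hX ▸ subset_convexHull ℝ X hx) k

variable {ι κ : Type*} [Fintype ι] [Fintype κ] {K : Subfield ℝ} {X Y : Set (ι → ℝ)}
  {φ : κ → (ι → ℝ) →ₗ[ℝ] ℝ} {c : κ → ℝ}

theorem IsWeakFace.mem_of_tight (h : IsWeakFace X Y K) (hYX : Y ⊆ X) (hY : Y.Nonempty)
    (hXK : ∀ x ∈ X, ∀ i, x i ∈ K) (hX : convexHull ℝ X = ⋂ k, {v | φ k v ≤ c k}) {x : ι → ℝ}
    (hx : x ∈ X) (hxc : ∀ k, (∀ y ∈ Y, φ k y = c k) → φ k x = c k) : x ∈ Y := by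
  have hXc := map_le_of_convexHull_eq_iInter hX
  obtain ⟨β, hβ, hβ1, hβlt⟩ :=
    exists_isFinSupp_map_vell_lt K hY φ c fun k y hy ↦ hXc k (hYX hy)
  set P := vell β
  have hP (k : κ) : (φ k P = c k ∧ φ k x = c k) ∨ φ k P < c k := by
    by_cases hk : ∀ y ∈ Y, φ k y = c k
    · refine Or.inl ⟨?_, hxc k hk⟩
      rw [map_vell_of_forall_mem_support (φ k) fun v hv ↦ hk v (hβ.1 hv), hβ1, mul_one]
    · push Not at hk
      obtain ⟨y, hy, hne⟩ := hk
      exact Or.inr (hβlt k ⟨y, hy, (hXc k (hYX hy)).lt_of_ne hne⟩)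
  obtain ⟨ε, hε, hεle⟩ := exists_rat_pos_forall_mul_le (a := fun k ↦ c k - φ k P)
    (b := fun k ↦ φ k P - φ k x) fun k ↦ (hP k).elim
      (fun ⟨hPk, hxk⟩ ↦ Or.inr ⟨by linarith, by linarith⟩) fun hPk ↦ Or.inl (by linarith)
  have hQ : P + (ε : ℝ) • (P - x) ∈ convexHull ℝ X := by
    rw [hX, Set.mem_iInter]
    intro k
    simp only [Set.mem_ofPred_eq, map_add, map_smul, map_sub, smul_eq_mul]
    linarith [hεle k]
  have hPK := vell_apply_mem (fun y hy ↦ hXK y (hYX hy)) hβ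
  have hεK : (ε : ℝ) ∈ K := SubfieldClass.ratCast_mem K ε
  obtain ⟨γ, hγ, hγ1, hγQ⟩ := exists_isFinSupp_of_mem_convexHull hXK (p := P + (ε : ℝ) • (P - x))
    (fun i ↦ add_mem (hPK i) (mul_mem hεK (sub_mem (hPK i) (hXK x hx i)))) hQ
  exact h.mem_of_vell_add_smul_eq hγ hβ hγ1 hβ1 hx hεK (by exact_mod_cast hε)
    (by rw [hγQ]; module)

theorem IsWeakFace.exists_eq_maximizer (h : IsWeakFace X Y K) (hYX : Y ⊆ X) (hY : Y.Nonempty)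
    (hXK : ∀ x ∈ X, ∀ i, x i ∈ K) (hX : convexHull ℝ X = ⋂ k, {v | φ k v ≤ c k}) :
    ∃ ψ : (ι → ℝ) →ₗ[ℝ] ℝ, Y = maximizer X ψ := by
  classical
  have hXc := map_le_of_convexHull_eq_iInter hX
  set I := Finset.univ.filter fun k ↦ ∀ y ∈ Y, φ k y = c k
  have hIY : ∀ y ∈ Y, ∑ k ∈ I, φ k y = ∑ k ∈ I, c k := fun y hy ↦
    Finset.sum_congr rfl fun k hk ↦ (Finset.mem_filter.1 hk).2 y hy
  obtain ⟨y₀, hy₀⟩ := hY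
  refine ⟨∑ k ∈ I, φ k, Set.Subset.antisymm (fun y hy ↦ ⟨hYX hy, fun x hx ↦ ?_⟩)
    fun x ⟨hx, hmax⟩ ↦ h.mem_of_tight hYX ⟨y₀, hy₀⟩ hXK hX hx fun k hk ↦ ?_⟩
  · simp only [LinearMap.sum_apply, hIY y hy]
    exact Finset.sum_le_sum fun k _ ↦ hXc k hx
  · have hsum : ∑ k ∈ I, φ k x = ∑ k ∈ I, c k := by
      refine le_antisymm (Finset.sum_le_sum fun k _ ↦ hXc k hx) ?_
      simpa only [LinearMap.sum_apply, hIY y₀ hy₀] using hmax y₀ (hYX hy₀)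
    exact (Finset.sum_eq_sum_iff_of_le fun k _ ↦ hXc k hx).1 hsum k
      (Finset.mem_filter.2 ⟨Finset.mem_univ k, hk⟩)

end Polyhedron

theorem statement12_general (n : ℕ) (𝔸 : AddSubgroup ℝ) (h𝔸 : 𝔸 ≠ ⊥)
    (X Y : Set (Fin n → ℝ)) (hYX : Y ⊆ X)
    (hXQ : ∀ x ∈ X, ∀ i : Fin n, ∃ q : ℚ, x i = (q : ℝ))
    (hpoly : ∃ (m : ℕ) (φ : Fin m → ((Fin n → ℝ) →ₗ[ℝ] ℝ)) (c : Fin m → ℝ),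
      convexHull ℝ X = ⋂ i : Fin m, {v : Fin n → ℝ | φ i v ≤ c i}) :
    (IsWeakFace X Y (𝔸 : Set ℝ) ↔
      ∃ F : Set (Fin n → ℝ),
        (F = ∅ ∨ ∃ φ : (Fin n → ℝ) →ₗ[ℝ] ℝ, F = maximizer (convexHull ℝ X) φ) ∧
        Y = F ∩ X) ∧
    (Y.Nonempty →
      (IsWeakFace X Y (𝔸 : Set ℝ) ↔
        ∃ φ : (Fin n → ℝ) →ₗ[ℝ] ℝ, Y = maximizer X φ)) := by
  obtain ⟨m, φ, c, hX⟩ := hpoly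
  have hXK : ∀ x ∈ X, ∀ i, x i ∈ (Rat.castHom ℝ).fieldRange := fun x hx i ↦
    Rat.mem_castHom_fieldRange.2 ((hXQ x hx i).imp fun _ h ↦ h.symm)
  have hard (hY : Y.Nonempty) (h : IsWeakFace X Y 𝔸) : ∃ ψ, Y = maximizer X ψ :=
    (h.rat_of_ne_bot h𝔸).exists_eq_maximizer hYX hY hXK hX
  refine ⟨⟨fun h ↦ ?_, ?_⟩, fun hY ↦ ⟨hard hY, ?_⟩⟩
  · rcases Y.eq_empty_or_nonempty with rfl | hY
    · exact ⟨∅, Or.inl rfl, by simp⟩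
    · obtain ⟨ψ, rfl⟩ := hard hY h
      exact ⟨_, Or.inr ⟨ψ, rfl⟩, (maximizer_convexHull_inter X ψ).symm⟩
  · rintro ⟨F, rfl | ⟨ψ, rfl⟩, rfl⟩
    · simpa using isWeakFace_empty X 𝔸
    · rw [maximizer_convexHull_inter]
      exact isWeakFace_maximizer X _ ψ
  · rintro ⟨ψ, rfl⟩
    exact isWeakFace_maximizer X _ ψ

/-- Let `Y ⊆ X ⊆ ℚⁿ ⊆ ℝⁿ` with `conv_ℝ(X)` a polyhedron (a finite
intersection of closed half-spaces), and `𝔸 ⊆ ℝ` a nonzero additive subgroup. Then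
`Y` is a weak `𝔸`-face of `X` iff `Y = F ∩ X` for some exposed face `F` of `conv_ℝ(X)`;
in particular, a nonempty `Y` is a weak `𝔸`-face of `X` iff `Y = X(φ)` for some linear
functional `φ`. -/
theorem statement12 (n : ℕ) (hn : 0 < n) (𝔸 : AddSubgroup ℝ) (h𝔸 : 𝔸 ≠ ⊥)
    (X Y : Set (Fin n → ℝ)) (hYX : Y ⊆ X)
    (hXQ : ∀ x ∈ X, ∀ i : Fin n, ∃ q : ℚ, x i = (q : ℝ))
    (hpoly : ∃ (m : ℕ) (φ : Fin m → ((Fin n → ℝ) →ₗ[ℝ] ℝ)) (c : Fin m → ℝ),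
      convexHull ℝ X = ⋂ i : Fin m, {v : Fin n → ℝ | φ i v ≤ c i}) :
    (IsWeakFace X Y (𝔸 : Set ℝ) ↔
      ∃ F : Set (Fin n → ℝ),
        (F = ∅ ∨ ∃ φ : (Fin n → ℝ) →ₗ[ℝ] ℝ, F = maximizer (convexHull ℝ X) φ) ∧
        Y = F ∩ X) ∧
    (Y.Nonempty →
      (IsWeakFace X Y (𝔸 : Set ℝ) ↔
        ∃ φ : (Fin n → ℝ) →ₗ[ℝ] ℝ, Y = maximizer X φ)) :=
  statement12_general n 𝔸 h𝔸 X Y hYX hXQ hpoly
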